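/- arXiv:2305.00347 — 6 statements merged into one kernel-verified Lean document; each statement's English description precedes it below -/
import Mathlib

section
/- If an infinite sequence of integers w_0, w_1, ... and a sequence of pairs (m_i, t_i) in (ℕ≥1 × ℕ) satisfy that for all i, either m_i > m_{i+1}, or (m_i = m_{i+1} and m_i · w_i ≤ t_i − t_{i+1} − 1), where pairs are compared lexicographically, then limsup_n (1/n) ∑_{i<n} w_i < 0. -/
/-- Every infinite path in the universal graph `U` on `ℕ≥1 × ℕ` (lexicographic order,
edge `(m,t) →ʷ (m',t')` iff `m > m'` or `m = m' ∧ m·w ≤ t - t' - 1`) has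
mean-payoff `limsup (1/n) ∑_{i<n} w_i < 0`. -/
theorem stmt0 (m t : ℕ → ℕ) (w : ℕ → ℤ)
    (hm : ∀ i, 1 ≤ m i)
    (hedge : ∀ i, m (i + 1) < m i ∨
      (m i = m (i + 1) ∧ (m i : ℤ) * w i ≤ (t i : ℤ) - t (i + 1) - 1)) :
    Filter.atTop.limsup
      (fun n => (((∑ i ∈ Finset.range n, (w i : ℝ)) / n : ℝ) : EReal)) < 0 := by
  classical
  have hstep : ∀ i, m (i + 1) ≤ m i := fun i =>
    (hedge i).elim le_of_lt (fun h => le_of_eq h.1.symm)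
  have hanti : Antitone m := antitone_nat_of_succ_le hstep
  have hex : ∃ v, ∃ N, m N = v := ⟨m 0, 0, rfl⟩
  obtain ⟨N, hN⟩ := Nat.find_spec hex
  have hmin : ∀ i, Nat.find hex ≤ m i := fun i =>
    le_of_not_gt fun h => Nat.find_min hex h ⟨i, rfl⟩
  have hconst : ∀ i, N ≤ i → m i = m N := fun i hi =>
    le_antisymm (hanti hi) (hN ▸ hmin i)
  set M := m N with hMdef
  have hM1 : 1 ≤ M := hm N
  have hMpos : (0:ℝ) < M := by exact_mod_cast hM1
  -- after N, each step: M * w n ≤ t n - t (n+1) - 1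
  have hstep2 : ∀ n, N ≤ n → (M:ℤ) * w n ≤ (t n : ℤ) - t (n + 1) - 1 := by
    intro n hn
    rcases hedge n with h | h
    · have h1 := hconst n hn
      have h2 := hconst (n + 1) (le_trans hn (Nat.le_succ n))
      omega
    · have h1 := hconst n hn
      calc (M:ℤ) * w n = (m n : ℤ) * w n := by rw [h1]
        _ ≤ (t n : ℤ) - t (n + 1) - 1 := h.2
  have key : ∀ n, N ≤ n →
      (M:ℤ) * ∑ i ∈ Finset.Ico N n, w i ≤ (t N : ℤ) - t n - ((n : ℤ) - N) := by
    intro n hn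
    induction n, hn using Nat.le_induction with
    | base => simp
    | succ n hn ih =>
      rw [Finset.sum_Ico_succ_top hn, mul_add]
      have h1 := hstep2 n hn
      push_cast
      push_cast at ih
      linarith
  set S : ℤ := ∑ i ∈ Finset.range N, w i with hS
  have total : ∀ n, N ≤ n →
      (M:ℤ) * ∑ i ∈ Finset.range n, w i ≤ (M:ℤ) * S + t N + N - n := by
    intro n hn
    have hsplit : ∑ i ∈ Finset.range N, w i + ∑ i ∈ Finset.Ico N n, w i
        = ∑ i ∈ Finset.range n, w i := Finset.sum_range_add_sum_Ico _ hn
    have h1 := key n hn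
    have h2 : (0:ℤ) ≤ t n := Int.ofNat_nonneg _
    have : (M:ℤ) * ∑ i ∈ Finset.range n, w i
        = (M:ℤ) * S + (M:ℤ) * ∑ i ∈ Finset.Ico N n, w i := by
      rw [← hsplit]; ring
    rw [this]
    linarith
  -- real threshold
  set B : ℝ := (M:ℝ) * S + t N + N with hB
  have hev : ∀ᶠ n in Filter.atTop,
      (((∑ i ∈ Finset.range n, (w i : ℝ)) / n : ℝ) : EReal)
        ≤ (((-(1 / (2 * M))) : ℝ) : EReal) := by
    have h1 : ∀ᶠ n : ℕ in Filter.atTop, N ≤ n := Filter.eventually_ge_atTop N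
    have h2 : ∀ᶠ n : ℕ in Filter.atTop, 2 * B ≤ (n : ℝ) :=
      tendsto_natCast_atTop_atTop.eventually_ge_atTop (2 * B)
    have h3 : ∀ᶠ n : ℕ in Filter.atTop, 1 ≤ n := Filter.eventually_ge_atTop 1
    filter_upwards [h1, h2, h3] with n hn hnB hn1
    rw [EReal.coe_le_coe_iff]
    have hnpos : (0:ℝ) < n := by exact_mod_cast hn1
    have htot := total n hn
    have htotR : (M:ℝ) * ((∑ i ∈ Finset.range n, w i : ℤ) : ℝ) ≤ B - n := by
      rw [hB]
      exact_mod_cast htot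
    have hcast : (∑ i ∈ Finset.range n, (w i : ℝ)) = ((∑ i ∈ Finset.range n, w i : ℤ) : ℝ) := by
      push_cast; ring
    rw [hcast]
    rw [div_le_iff₀ hnpos]
    set T : ℝ := ((∑ i ∈ Finset.range n, w i : ℤ) : ℝ)
    have h2M : (0:ℝ) < 2 * M := by linarith
    rw [neg_mul, le_neg, one_div_mul_eq_div, div_le_iff₀ h2M]
    linarith
  have hle := Filter.limsup_le_of_le (by isBoundedDefault) hev
  refine lt_of_le_of_lt hle ?_
  have : ((0:ℝ) : EReal) = (0 : EReal) := rfl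
  rw [← this, EReal.coe_lt_coe_iff]
  have : (0:ℝ) < 1 / (2 * M) := by positivity
  linarith
end

section
/- For an eventually constant-first-coordinate path: if there exist i_0 and m ≥ 1 with m_i = m for all i ≥ i_0, and m · w_i ≤ t_i − t_{i+1} − 1 for all i ≥ i_0, where t_i ∈ ℕ, then limsup_n (1/n) ∑_{i<n} w_i ≤ −1/m. -/
/-- If the first coordinate is eventually constant equal to `m ≥ 1` and
`m·w_i ≤ t_i - t_{i+1} - 1` for all `i ≥ i₀`, then
`limsup (1/n) ∑_{i<n} w_i ≤ -1/m`. -/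
theorem stmt1 (m : ℕ) (hm : 1 ≤ m) (w : ℕ → ℤ) (t : ℕ → ℕ) (i0 : ℕ)
    (hedge : ∀ i, i0 ≤ i → (m : ℤ) * w i ≤ (t i : ℤ) - t (i + 1) - 1) :
    Filter.atTop.limsup
      (fun n => (((∑ i ∈ Finset.range n, (w i : ℝ)) / n : ℝ) : EReal))
      ≤ ((-1 / m : ℝ) : EReal) := by
  have hm0 : (0:ℝ) < m := by exact_mod_cast hm
  set A : ℤ := ∑ i ∈ Finset.range i0, w i with hA
  set T : ℤ := (t i0 : ℤ) + i0 with hT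
  have key : ∀ n, i0 ≤ n →
      (m:ℤ) * ∑ i ∈ Finset.Ico i0 n, w i ≤ (t i0 : ℤ) - t n - ((n:ℤ) - i0) := by
    intro n hn
    induction n, hn using Nat.le_induction with
    | base => simp
    | succ n hn ih =>
      rw [Finset.sum_Ico_succ_top hn, mul_add]
      have h2 := hedge n hn
      push_cast at ih ⊢
      linarith
  set g : ℕ → ℝ := fun n => ((A : ℝ) + T/m)/n - 1/m with hg
  have hgt : Filter.Tendsto g Filter.atTop (nhds (-1/m)) := by
    have h1 : Filter.Tendsto (fun n : ℕ => ((A : ℝ) + T/m)/n) Filter.atTop (nhds 0) :=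
      tendsto_const_div_atTop_nhds_zero_nat _
    rw [show (-1/m : ℝ) = 0 - 1/m by ring]
    exact h1.sub tendsto_const_nhds
  have hev : ∀ᶠ n in Filter.atTop,
      (((∑ i ∈ Finset.range n, (w i : ℝ)) / n : ℝ) : EReal) ≤ ((g n : ℝ) : EReal) := by
    filter_upwards [Filter.eventually_ge_atTop (max i0 1)] with n hn
    have hni0 : i0 ≤ n := le_trans (le_max_left _ _) hn
    have hn1 : 1 ≤ n := le_trans (le_max_right _ _) hn
    have hn0 : (0:ℝ) < n := by exact_mod_cast hn1
    rw [EReal.coe_le_coe_iff]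
    have hsplit : ∑ i ∈ Finset.range n, (w i : ℝ)
        = (A : ℝ) + ((∑ i ∈ Finset.Ico i0 n, w i : ℤ) : ℝ) := by
      rw [hA]
      push_cast
      rw [Finset.sum_range_add_sum_Ico _ hni0]
    set S : ℤ := ∑ i ∈ Finset.Ico i0 n, w i with hS
    have hSle : (S : ℝ) ≤ (T - n)/m := by
      rw [le_div_iff₀ hm0]
      have := key n hni0
      have htn : (0:ℤ) ≤ t n := Int.ofNat_nonneg _
      have : (m:ℤ) * S ≤ T - n := by rw [hT]; linarith
      have h3 : (((m:ℤ) * S : ℤ) : ℝ) ≤ ((T - n : ℤ) : ℝ) := by exact_mod_cast this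
      push_cast at h3
      linarith
    rw [hsplit]
    have h1 : ((A:ℝ) + S)/n ≤ ((A:ℝ) + (T - n)/m)/n := by
      gcongr
    have h2 : ((A:ℝ) + ((T:ℝ) - n)/m)/n = g n := by
      rw [hg]
      field_simp
      ring
    calc ((A:ℝ) + S)/n ≤ ((A:ℝ) + ((T:ℝ) - n)/m)/n := h1
      _ = g n := h2
  have hlim : Filter.atTop.limsup (fun n => ((g n : ℝ) : EReal)) = ((-1/m : ℝ) : EReal) := by
    have : Filter.Tendsto (fun n => ((g n : ℝ) : EReal)) Filter.atTop
        (nhds ((-1/m : ℝ) : EReal)) :=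
      (EReal.continuous_coe_iff.mpr continuous_id).continuousAt.tendsto.comp hgt
    exact this.limsup_eq
  exact le_trans (Filter.limsup_le_limsup hev) (le_of_eq hlim)
end

section
/- Suppose that for every vertex v of an integer-weighted directed graph G, every m ≥ 1, and every t ∈ ℕ, there exists a finite path π from v of length ℓ with sum(π) > (−ℓ + t)/m. Then from any vertex v_0 there exists an infinite path whose weight sequence w satisfies limsup_n (1/n) ∑_{i<n} w_i ≥ 0. -/
open Filter

section Aux

variable {V : Type*}

/-- Auxiliary state: a finite path from `v0`. -/
structure PathSt (E : V → ℤ → V → Prop) (v0 : V) where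
  n : ℕ
  p : ℕ → V
  ws : ℕ → ℤ
  h0 : p 0 = v0
  hE : ∀ i < n, E (p i) (ws i) (p (i + 1))

lemma step_ex {E : V → ℤ → V → Prop}
    (h : ∀ (v : V) (m t : ℕ), 1 ≤ m →
      ∃ (ℓ : ℕ) (p : ℕ → V) (ws : ℕ → ℤ), p 0 = v ∧
        (∀ i < ℓ, E (p i) (ws i) (p (i + 1))) ∧
        (-(ℓ : ℝ) + t) / m < (∑ i ∈ Finset.range ℓ, (ws i : ℝ)))
    {v0 : V} (s : PathSt E v0) (m : ℕ) (hm : 1 ≤ m) :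
    ∃ s' : PathSt E v0, s.n < s'.n ∧ (∀ i ≤ s.n, s'.p i = s.p i) ∧
      (∀ i < s.n, s'.ws i = s.ws i) ∧
      -(s'.n : ℝ) / m < ∑ i ∈ Finset.range s'.n, (s'.ws i : ℝ) := by
  set S : ℤ := ∑ i ∈ Finset.range s.n, s.ws i with hS
  set t : ℕ := (-(m : ℤ) * S).toNat with ht
  obtain ⟨ℓ, q, u, hq0, hqE, hsum⟩ := h (s.p s.n) m t hm
  have hmR : (0 : ℝ) < (m : ℝ) := by exact_mod_cast hm
  have htR : -(m : ℝ) * (S : ℝ) ≤ (t : ℝ) := by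
    have : -(m : ℤ) * S ≤ (t : ℤ) := Int.self_le_toNat _
    exact_mod_cast this
  have hℓ : 1 ≤ ℓ := by
    by_contra hc
    push_neg at hc
    interval_cases ℓ
    simp only [Finset.range_zero, Finset.sum_empty, Nat.cast_zero, neg_zero, zero_add] at hsum
    have : (0:ℝ) ≤ (t : ℝ) / m := div_nonneg (by positivity) hmR.le
    linarith
  set p' : ℕ → V := fun i => if i ≤ s.n then s.p i else q (i - s.n) with hp'
  set w' : ℕ → ℤ := fun i => if i < s.n then s.ws i else u (i - s.n) with hw'
  have hp'le : ∀ i ≤ s.n, p' i = s.p i := fun i hi => if_pos hi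
  have hp'ge : ∀ i, s.n ≤ i → p' i = q (i - s.n) := by
    intro i hi
    rcases eq_or_lt_of_le hi with he | hlt
    · simp only [hp', ← he, le_refl, if_pos, Nat.sub_self, hq0]
    · simp only [hp', if_neg (by omega : ¬ i ≤ s.n)]
  have hw'lt : ∀ i < s.n, w' i = s.ws i := fun i hi => if_pos hi
  have hw'ge : ∀ i, s.n ≤ i → w' i = u (i - s.n) := fun i hi => if_neg (by omega)
  refine ⟨⟨s.n + ℓ, p', w', by rw [hp'le 0 (by omega), s.h0], ?_⟩,
      by simp only; omega, fun i hi => hp'le i hi, fun i hi => hw'lt i hi, ?_⟩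
  · intro i hi
    by_cases h1 : i < s.n
    · rw [hp'le i h1.le, hw'lt i h1, hp'le (i+1) h1]
      exact s.hE i h1
    · push_neg at h1
      rw [hp'ge i h1, hw'ge i h1, hp'ge (i+1) (by omega),
        show i + 1 - s.n = (i - s.n) + 1 by omega]
      exact hqE (i - s.n) (by omega)
  · -- sum bound
    have hsplit : ∑ i ∈ Finset.range (s.n + ℓ), ((w' i : ℤ) : ℝ)
        = (S : ℝ) + ∑ i ∈ Finset.range ℓ, (u i : ℝ) := by
      rw [Finset.sum_range_add]
      congr 1
      · rw [hS]
        push_cast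
        exact Finset.sum_congr rfl fun i hi => by
          rw [hw'lt i (Finset.mem_range.mp hi)]
      · exact Finset.sum_congr rfl fun i hi => by
          rw [hw'ge (s.n + i) (by omega), Nat.add_sub_cancel_left]
    simp only
    rw [hsplit, div_lt_iff₀ hmR] at *
    have hn0 : (0:ℝ) ≤ (s.n : ℝ) := Nat.cast_nonneg _
    push_cast
    push_cast at hsum htR
    nlinarith

end Aux

/-- If from every vertex `v`, for every `m ≥ 1` and `t ∈ ℕ`, there is a finite path
from `v` of some length `ℓ` with sum `> (-ℓ + t)/m`, then from any vertex there is
an infinite path whose weight sequence has `limsup (1/n) ∑_{i<n} w_i ≥ 0`. -/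
theorem stmt4 {V : Type*} (E : V → ℤ → V → Prop)
    (h : ∀ (v : V) (m t : ℕ), 1 ≤ m →
      ∃ (ℓ : ℕ) (p : ℕ → V) (ws : ℕ → ℤ), p 0 = v ∧
        (∀ i < ℓ, E (p i) (ws i) (p (i + 1))) ∧
        (-(ℓ : ℝ) + t) / m < (∑ i ∈ Finset.range ℓ, (ws i : ℝ))) :
    ∀ v0 : V, ∃ (p : ℕ → V) (ws : ℕ → ℤ), p 0 = v0 ∧
      (∀ i, E (p i) (ws i) (p (i + 1))) ∧
      0 ≤ Filter.atTop.limsup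
        (fun n => (((∑ i ∈ Finset.range n, (ws i : ℝ)) / n : ℝ) : EReal)) := by
  intro v0
  -- build the sequence of states
  let F : ℕ → PathSt E v0 := fun k => Nat.rec
    ⟨0, fun _ => v0, fun _ => 0, rfl, by omega⟩
    (fun k s => Classical.choose (step_ex h s (k + 1) (by omega))) k
  have hFspec : ∀ k, (F k).n < (F (k+1)).n ∧
      (∀ i ≤ (F k).n, (F (k+1)).p i = (F k).p i) ∧
      (∀ i < (F k).n, (F (k+1)).ws i = (F k).ws i) ∧
      -((F (k+1)).n : ℝ) / ((k+1 : ℕ) : ℝ) <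
        ∑ i ∈ Finset.range (F (k+1)).n, ((F (k+1)).ws i : ℝ) := fun k =>
    Classical.choose_spec (step_ex h (F k) (k + 1) (by omega))
  have hmono : ∀ k k', k ≤ k' → (F k).n ≤ (F k').n := by
    intro k k' hk
    induction k' , hk using Nat.le_induction with
    | base => exact le_rfl
    | succ k' hk ih => exact ih.trans (hFspec k').1.le
  have hnk : ∀ k, k ≤ (F k).n := by
    intro k
    induction k with
    | zero => omega
    | succ k ih => have := (hFspec k).1; omega
  have hagreeP : ∀ k k', k ≤ k' → ∀ i ≤ (F k).n, (F k').p i = (F k).p i := by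
    intro k k' hk
    induction k' , hk using Nat.le_induction with
    | base => intro i _; rfl
    | succ k' hk ih =>
        intro i hi
        rw [(hFspec k').2.1 i (hi.trans (hmono k k' hk)), ih i hi]
  have hagreeW : ∀ k k', k ≤ k' → ∀ i < (F k).n, (F k').ws i = (F k).ws i := by
    intro k k' hk
    induction k' , hk using Nat.le_induction with
    | base => intro i _; rfl
    | succ k' hk ih =>
        intro i hi
        rw [(hFspec k').2.2.1 i (hi.trans_le (hmono k k' hk)), ih i hi]
  refine ⟨fun i => (F (i+1)).p i, fun i => (F (i+1)).ws i, ?_, ?_, ?_⟩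
  · exact (F 1).h0
  · intro i
    have h1 : i + 1 < (F (i+2)).n := lt_of_lt_of_le (by omega) (hnk (i+2))
    have hp1 : (F (i+2)).p i = (F (i+1)).p i :=
      hagreeP (i+1) (i+2) (by omega) i (le_trans (by omega) (hnk (i+1)))
    have hw1 : (F (i+2)).ws i = (F (i+1)).ws i :=
      hagreeW (i+1) (i+2) (by omega) i (lt_of_lt_of_le (by omega) (hnk (i+1)))
    show E ((F (i+1)).p i) ((F (i+1)).ws i) ((F (i+1+1)).p (i+1))
    rw [← hp1, ← hw1]
    exact (F (i+2)).hE i (by omega)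
  · -- limsup part
    set wsi : ℕ → ℤ := fun i => (F (i+1)).ws i with hwsi
    have hsumeq : ∀ k, ∑ i ∈ Finset.range (F k).n, (wsi i : ℝ)
        = ∑ i ∈ Finset.range (F k).n, ((F k).ws i : ℝ) := by
      intro k
      apply Finset.sum_congr rfl
      intro i hi
      have hi' := Finset.mem_range.mp hi
      have h1 : (F (max k (i+1))).ws i = (F k).ws i :=
        hagreeW k _ (le_max_left _ _) i hi'
      have h2 : (F (max k (i+1))).ws i = (F (i+1)).ws i :=
        hagreeW (i+1) _ (le_max_right _ _) i (lt_of_lt_of_le (by omega) (hnk (i+1)))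
      simp only [hwsi]
      rw [← h2, h1]
    set f : ℕ → EReal := fun n => (((∑ i ∈ Finset.range n, (wsi i : ℝ)) / n : ℝ) : EReal)
      with hf
    have key : ∀ k : ℕ, 1 ≤ k → ∃ n, k ≤ n ∧ (((-1 : ℝ)/(k:ℝ) : ℝ) : EReal) ≤ f n := by
      intro k hk
      obtain ⟨k0, hk0⟩ : ∃ k0, k = k0 + 1 := ⟨k - 1, by omega⟩
      refine ⟨(F k).n, (hnk k).trans_eq rfl, ?_⟩
      have hbound := (hFspec k0).2.2.2
      rw [← hk0] at hbound
      have hn0 : 0 < (F k).n := lt_of_lt_of_le (by omega) (hnk k)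
      have hn0R : (0:ℝ) < ((F k).n : ℝ) := by exact_mod_cast hn0
      have hkR : (0:ℝ) < (k : ℝ) := by exact_mod_cast hk
      have : (-1 : ℝ)/(k:ℝ) ≤ (∑ i ∈ Finset.range (F k).n, (wsi i : ℝ)) / (F k).n := by
        rw [hsumeq k]
        rw [div_le_div_iff₀ hkR hn0R]
        rw [div_lt_iff₀ hkR] at hbound
        calc (-1 : ℝ) * (F k).n = -((F k).n : ℝ) := by ring
          _ ≤ (∑ i ∈ Finset.range (F k).n, ((F k).ws i : ℝ)) * k := by
              nlinarith
      exact EReal.coe_le_coe_iff.mpr this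
    have hfreq : ∀ k : ℕ, 1 ≤ k → (((-1 : ℝ)/(k:ℝ) : ℝ) : EReal) ≤ atTop.limsup f := by
      intro k hk
      apply Filter.le_limsup_of_frequently_le'
      rw [Filter.frequently_atTop]
      intro a
      obtain ⟨n, hn1, hn2⟩ := key (max k a) (le_trans hk (le_max_left _ _))
      refine ⟨n, le_trans (le_max_right _ _) hn1, le_trans ?_ hn2⟩
      apply EReal.coe_le_coe_iff.mpr
      have hkR : (0:ℝ) < (k : ℝ) := by exact_mod_cast hk
      have hmR : (0:ℝ) < ((max k a : ℕ) : ℝ) := by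
        exact_mod_cast lt_of_lt_of_le hk (le_max_left _ _)
      rw [div_le_div_iff₀ hkR hmR]
      have : (k : ℝ) ≤ ((max k a : ℕ) : ℝ) := by exact_mod_cast le_max_left k a
      nlinarith
    by_contra hc
    push_neg at hc
    have hbot : ((-1 : ℝ) : EReal) ≤ atTop.limsup f := by
      have := hfreq 1 le_rfl
      simpa using this
    have hne_top : atTop.limsup f ≠ ⊤ := fun ht => by
      rw [ht] at hc; exact absurd hc (by simp)
    have hne_bot : atTop.limsup f ≠ ⊥ := fun hb => by
      rw [hb] at hbot; exact (EReal.bot_lt_coe (-1)).not_ge hbot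
    obtain ⟨r, hr⟩ := EReal.canLift.prf (atTop.limsup f) ⟨hne_top, hne_bot⟩
    rw [← hr] at hc hfreq
    have hr0 : r < 0 := by exact_mod_cast hc
    set k : ℕ := ⌈1/(-r)⌉₊ + 1 with hk
    have hk1 : 1 ≤ k := by omega
    have hkR : (0:ℝ) < (k : ℝ) := by exact_mod_cast hk1
    have hle : (-1 : ℝ)/(k:ℝ) ≤ r := EReal.coe_le_coe_iff.mp (hfreq k hk1)
    have hceil : 1/(-r) ≤ (⌈1/(-r)⌉₊ : ℝ) := Nat.le_ceil _
    have hklt : 1/(-r) < (k : ℝ) := by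
      rw [hk]; push_cast; linarith
    have h1 : 1 < (k : ℝ) * (-r) := by
      rw [div_lt_iff₀ (by linarith : (0:ℝ) < -r)] at hklt
      linarith
    rw [div_le_iff₀ hkR] at hle
    nlinarith
end

section
/- Let G be an integer-weighted directed graph, m ≥ 1, and suppose that for every vertex u reachable from a fixed vertex v there exists some t ∈ ℕ bounding all paths from u as sum(π) ≤ (−|π| + t)/m; let t_u be the minimal such t. Then for every edge u →^w u' with u reachable from v, we have m·w ≤ t_u − t_{u'} − 1. -/
/-- A vertex `u` is reachable from `v` if there is a finite path from `v` to `u`. -/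
def Reach {V : Type*} (E : V → ℤ → V → Prop) (v u : V) : Prop :=
  ∃ (ℓ : ℕ) (p : ℕ → V) (ws : ℕ → ℤ), p 0 = v ∧ p ℓ = u ∧
    ∀ i < ℓ, E (p i) (ws i) (p (i + 1))

/-- `u` satisfies the path bound with constant `t` (and slope `-1/m`). -/
def Bound {V : Type*} (E : V → ℤ → V → Prop) (m : ℕ) (u : V) (t : ℕ) : Prop :=
  ∀ (ℓ : ℕ) (p : ℕ → V) (ws : ℕ → ℤ), p 0 = u →
    (∀ i < ℓ, E (p i) (ws i) (p (i + 1))) →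
    (∑ i ∈ Finset.range ℓ, (ws i : ℝ)) ≤ (-(ℓ : ℝ) + t) / m

/-- If `tfun u` is the minimal constant bounding all paths from `u`, for each `u`
reachable from `v`, then along any edge `u →ʷ u'` in the reachable part we have
`m·w ≤ t_u - t_{u'} - 1`; i.e. `u ↦ (m, t_u)` is a morphism into `U`. -/
theorem stmt7 {V : Type*} (E : V → ℤ → V → Prop) (v : V) (m : ℕ) (hm : 1 ≤ m)
    (tfun : V → ℕ)
    (htf : ∀ u, Reach E v u →
      Bound E m u (tfun u) ∧ ∀ t < tfun u, ¬ Bound E m u t) :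
    ∀ (u : V) (w : ℤ) (u' : V), Reach E v u → E u w u' →
      (m : ℤ) * w ≤ (tfun u : ℤ) - tfun u' - 1 := by
  intro u w u' hru hE
  obtain ⟨hb, hmin⟩ := htf u hru
  have hmpos : (0:ℝ) < m := by exact_mod_cast hm
  -- Step 1: from the single-edge path, m*w ≤ tfun u - 1.
  have h1 : (m:ℤ) * w ≤ (tfun u : ℤ) - 1 := by
    have key := hb 1 (fun i => if i = 0 then u else u') (fun _ => w) (by simp) ?_
    · rw [Finset.sum_range_one, le_div_iff₀ hmpos] at key
      have : (m:ℝ) * w ≤ (tfun u : ℝ) - 1 := by push_cast at key ⊢; nlinarith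
      exact_mod_cast this
    · intro i hi
      interval_cases i
      simpa using hE
  -- Step 2: u' is reachable.
  have hru' : Reach E v u' := by
    obtain ⟨ℓ, p, ws, hp0, hpl, hedge⟩ := hru
    refine ⟨ℓ + 1, fun i => if i ≤ ℓ then p i else u',
      fun i => if i < ℓ then ws i else w, by simp [hp0], by simp, ?_⟩
    intro i hi
    rcases lt_or_eq_of_le (Nat.lt_succ_iff.mp hi) with h | h
    · have h1 : i ≤ ℓ := h.le
      have h2 : i + 1 ≤ ℓ := h
      simp only [if_pos h1, if_pos h2, if_pos h]
      exact hedge i h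
    · subst h
      simp only [le_refl, if_pos, lt_irrefl, if_neg, Nat.not_lt.mpr (le_refl i),
        Nat.not_le.mpr (Nat.lt_succ_self i), if_false, if_true, hpl]
      exact hE
  have hs : 0 ≤ (tfun u : ℤ) - 1 - m * w := by linarith
  set s : ℕ := ((tfun u : ℤ) - 1 - m * w).toNat with hsdef
  have hscast : (s : ℤ) = (tfun u : ℤ) - 1 - m * w := Int.toNat_of_nonneg hs
  -- Step 3: Bound E m u' s.
  have hb' : Bound E m u' s := by
    intro ℓ p ws hp0 hedge
    have key := hb (ℓ + 1) (fun i => if i = 0 then u else p (i - 1))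
      (fun i => if i = 0 then w else ws (i - 1)) (by simp) ?_
    · rw [Finset.sum_range_succ'] at key
      simp only [Nat.succ_ne_zero, if_false, Nat.add_sub_cancel, if_pos rfl] at key
      rw [le_div_iff₀ hmpos] at key
      rw [le_div_iff₀ hmpos]
      have hsR : (s : ℝ) = (tfun u : ℝ) - 1 - m * w := by exact_mod_cast hscast
      push_cast at key ⊢
      nlinarith
    · intro i hi
      match i with
      | 0 => simpa [hp0] using hE
      | j + 1 =>
        simp only [Nat.succ_ne_zero, if_false, Nat.add_sub_cancel]
        exact hedge j (by omega)
  -- Step 4: minimality at u'.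
  obtain ⟨_, hmin'⟩ := htf u' hru'
  have hle : tfun u' ≤ s := by
    by_contra h
    exact hmin' s (Nat.lt_of_not_le h) hb'
  have : (tfun u' : ℤ) ≤ (s : ℤ) := by exact_mod_cast hle
  linarith [hscast ▸ this]
end

section
/- There exists an integer-weighted game graph of finite out-degree in which the minimizer Eve has a winning strategy for the objective {w : limsup_n (1/n)∑_{i<n} w_i ≤ 0} but no positional (memoryless) winning strategy. -/
namespace Stmt10

/-- Round start times: `T j = Σ_{i<j} (i+3)`. Round `j` climbs `0,1,...,j+2` then jumps to `0`. -/
def T : ℕ → ℕ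
  | 0 => 0
  | j+1 => T j + (j + 3)

/-- The edge relation: climb `n → n+1` with weight 1, or (for `n ≥ 2`) exit `n → 0`
with weight `1 - n`. -/
def E (n : ℕ) (w : ℤ) (m : ℕ) : Prop :=
  (w = 1 ∧ m = n + 1) ∨ (2 ≤ n ∧ w = 1 - (n : ℤ) ∧ m = 0)

lemma le_T (j : ℕ) : j ≤ T j := by
  induction j with
  | zero => simp [T]
  | succ n ih => simp only [T]; omega

lemma T_mono : Monotone T :=
  monotone_nat_of_le_succ fun n => by simp only [T]; omega

lemma T_succ (j : ℕ) : T (j + 1) = T j + (j + 3) := rfl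

/-- The round index of time `t`. -/
def J (t : ℕ) : ℕ := Nat.findGreatest (fun j => T j ≤ t) t

lemma J_le1 (t : ℕ) : T (J t) ≤ t :=
  Nat.findGreatest_spec (P := fun j => T j ≤ t) (Nat.zero_le t) (by simp [T])

lemma J_lt2 (t : ℕ) : t < T (J t + 1) := by
  by_cases h : J t + 1 ≤ t
  · have h2 := Nat.findGreatest_is_greatest (P := fun j => T j ≤ t) (Nat.lt_succ_self (J t)) h
    exact Nat.lt_of_not_le h2
  · have := le_T (J t + 1); omega

lemma J_eq {j t : ℕ} (h1 : T j ≤ t) (h2 : t < T (j + 1)) : J t = j := by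
  have hle : j ≤ J t := Nat.le_findGreatest (le_trans (le_T j) h1) h1
  have hge : J t ≤ j := by
    by_contra h
    push_neg at h
    have h3 := T_mono (show j + 1 ≤ J t from h)
    have h4 := J_le1 t
    omega
  omega

/-- Position (vertex) at time `t` in the canonical winning play. -/
def Pos (t : ℕ) : ℕ := t - T (J t)

/-- Weight at time `t` in the canonical winning play. -/
def W (t : ℕ) : ℤ := if t - T (J t) = J t + 2 then -((J t : ℤ) + 1) else 1

lemma W_climb {t : ℕ} (h : ¬ t - T (J t) = J t + 2) : W t = 1 := if_neg h

lemma W_exit {t : ℕ} (h : t - T (J t) = J t + 2) : W t = -((J t : ℤ) + 1) := if_pos h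

lemma r_le (t : ℕ) : t - T (J t) ≤ J t + 2 := by
  have h1 := J_le1 t; have h2 := J_lt2 t; have h3 := T_succ (J t); omega

lemma step (t : ℕ) :
    (t - T (J t) < J t + 2 ∧ J (t + 1) = J t) ∨
    (t - T (J t) = J t + 2 ∧ J (t + 1) = J t + 1) := by
  have h1 := J_le1 t
  have h3 := T_succ (J t); have h4 := T_succ (J t + 1)
  have hr := r_le t
  rcases Nat.lt_or_ge (t - T (J t)) (J t + 2) with h | h
  · exact Or.inl ⟨h, J_eq (le_trans h1 (Nat.le_succ t)) (by omega)⟩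
  · have heq : t - T (J t) = J t + 2 := le_antisymm hr h
    exact Or.inr ⟨heq, J_eq (by omega) (by omega)⟩

lemma valid (t : ℕ) : E (Pos t) (W t) (Pos (t + 1)) := by
  have h1 := J_le1 t
  have h3 := T_succ (J t)
  rcases step t with ⟨hr, hJ⟩ | ⟨hr, hJ⟩
  · left
    refine ⟨W_climb (by omega), ?_⟩
    simp only [Pos, hJ]; omega
  · right
    refine ⟨by simp only [Pos]; omega, ?_, ?_⟩
    · rw [W_exit hr]
      simp only [Pos, hr]
      push_cast; ring
    · simp only [Pos, hJ]; omega

lemma sum_W (t : ℕ) :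
    ∑ i ∈ Finset.range t, W i = (J t : ℤ) + (t : ℤ) - (T (J t) : ℤ) := by
  induction t with
  | zero => simp [J, T]
  | succ t ih =>
    rw [Finset.sum_range_succ, ih]
    have h1 := J_le1 t
    have h3 := T_succ (J t)
    rcases step t with ⟨hr, hJ⟩ | ⟨hr, hJ⟩
    · rw [W_climb (by omega), hJ]; omega
    · rw [W_exit hr, hJ]
      have h4 := T_succ (J t + 1)
      omega

lemma J_tendsto : Filter.Tendsto J Filter.atTop Filter.atTop := by
  apply Filter.tendsto_atTop.2
  intro b
  filter_upwards [Filter.eventually_ge_atTop (T b)] with t ht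
  exact Nat.le_findGreatest (le_trans (le_T b) ht) ht

lemma aux_quad (j : ℕ) (hj : 1 ≤ j) : 2 * (j + 1) * (j + 1) ≤ 6 * T j := by
  induction j, hj using Nat.le_induction with
  | base =>
    have : T 1 = 3 := rfl
    omega
  | succ n hn ih =>
    rw [T_succ]
    nlinarith [ih]

lemma key (t : ℕ) (ht : 1 ≤ t) : (2 * J t + 2) * (J t + 1) ≤ 6 * t := by
  have h1 := J_le1 t
  rcases Nat.eq_zero_or_pos (J t) with h | h
  · rw [h]; omega
  · have h2 := aux_quad (J t) h
    nlinarith [h1, h2]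

lemma avg_bound (t : ℕ) (ht : 1 ≤ t) :
    0 ≤ (∑ i ∈ Finset.range t, (W i : ℝ)) / t ∧
      (∑ i ∈ Finset.range t, (W i : ℝ)) / t ≤ 6 / ((J t : ℝ) + 1) := by
  have hsum : (∑ i ∈ Finset.range t, (W i : ℝ)) = (J t : ℝ) + t - T (J t) := by
    exact_mod_cast congrArg (fun z : ℤ => (z : ℝ)) (sum_W t)
  have h1 := J_le1 t
  have hr := r_le t
  have ht' : (T (J t) : ℝ) ≤ t := by exact_mod_cast h1
  have hJ0 : (0:ℝ) ≤ (J t : ℝ) := by positivity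
  have htpos : (0:ℝ) < t := by exact_mod_cast ht
  have hnum0 : (0:ℝ) ≤ (J t : ℝ) + t - T (J t) := by linarith
  constructor
  · rw [hsum]; exact div_nonneg hnum0 htpos.le
  · rw [hsum, div_le_div_iff₀ htpos (by positivity)]
    have hk : ((2 * J t + 2) * (J t + 1) : ℝ) ≤ 6 * t := by exact_mod_cast key t ht
    have hr' : (t : ℝ) ≤ (T (J t) : ℝ) + (J t : ℝ) + 2 := by
      exact_mod_cast (by omega : t ≤ T (J t) + J t + 2)
    have hnum_le : (J t : ℝ) + t - T (J t) ≤ 2 * (J t : ℝ) + 2 := by linarith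
    have hfac : (0:ℝ) ≤ (J t : ℝ) + 1 := by linarith
    have := mul_le_mul_of_nonneg_right hnum_le hfac
    push_cast at hk
    linarith

lemma tendsto_avg :
    Filter.Tendsto (fun t : ℕ => (∑ i ∈ Finset.range t, (W i : ℝ)) / t)
      Filter.atTop (nhds 0) := by
  have hJR : Filter.Tendsto (fun t => (J t : ℝ)) Filter.atTop Filter.atTop :=
    tendsto_natCast_atTop_atTop.comp J_tendsto
  have hup : Filter.Tendsto (fun t => 6 / ((J t : ℝ) + 1)) Filter.atTop (nhds 0) :=
    Filter.Tendsto.div_atTop tendsto_const_nhds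
      (Filter.tendsto_atTop_add_const_right _ 1 hJR)
  apply tendsto_of_tendsto_of_tendsto_of_le_of_le' tendsto_const_nhds hup
  · filter_upwards [Filter.eventually_ge_atTop 1] with t ht using (avg_bound t ht).1
  · filter_upwards [Filter.eventually_ge_atTop 1] with t ht using (avg_bound t ht).2

lemma limsup_W_le :
    Filter.atTop.limsup
      (fun n => (((∑ i ∈ Finset.range n, (W i : ℝ)) / n : ℝ) : EReal)) ≤ 0 := by
  have h : Filter.Tendsto
      (fun n : ℕ => (((∑ i ∈ Finset.range n, (W i : ℝ)) / n : ℝ) : EReal))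
      Filter.atTop (nhds ((0 : ℝ) : EReal)) :=
    (EReal.tendsto_coe).2 tendsto_avg
  rw [h.limsup_eq]
  simp

lemma not_limsup_le (f : ℕ → EReal) (b : ℝ) (hb : 0 < b)
    (hfreq : ∀ N : ℕ, ∃ n ≥ N, f n = ((b : ℝ) : EReal)) :
    ¬ Filter.atTop.limsup f ≤ 0 := by
  intro hle
  have h1 : ((b : ℝ) : EReal) ≤ Filter.atTop.limsup f := by
    refine Filter.le_limsup_of_frequently_le ?_ (by isBoundedDefault)
    rw [Filter.frequently_atTop]
    intro N
    obtain ⟨n, hn, he⟩ := hfreq N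
    exact ⟨n, hn, he.ge⟩
  have h2 : ((b : ℝ) : EReal) ≤ ((0 : ℝ) : EReal) := by
    refine le_trans h1 ?_
    rw [EReal.coe_zero]
    exact hle
  rw [EReal.coe_le_coe_iff] at h2
  linarith

lemma sum_ws (K : ℕ) (m : ℕ) :
    ∑ i ∈ Finset.range (m * (K + 1)),
      (if i % (K + 1) = K then (1 - (K : ℤ)) else 1) = m := by
  induction m with
  | zero => simp
  | succ m ih =>
    rw [Nat.succ_mul, Finset.sum_range_add, ih]
    have hmod : ∀ i ∈ Finset.range (K + 1),
        (if (m * (K + 1) + i) % (K + 1) = K then (1 - (K : ℤ)) else 1)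
          = (if i = K then (1 - (K : ℤ)) else 1) := by
      intro i hi
      rw [Nat.add_comm, Nat.add_mul_mod_self_right, Nat.mod_eq_of_lt (Finset.mem_range.1 hi)]
    rw [Finset.sum_congr rfl hmod, Finset.sum_range_succ, if_pos rfl]
    have h2 : ∀ i ∈ Finset.range K, (if i = K then (1 - (K : ℤ)) else 1) = 1 :=
      fun i hi => if_neg (Finset.mem_range.1 hi).ne
    rw [Finset.sum_congr rfl h2, Finset.sum_const, Finset.card_range, Nat.smul_one_eq_cast]
    push_cast
    ring

end Stmt10

open Stmt10 in
/-- There is an integer-weighted game graph of finite out-degree in which Eve (the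
minimizer) has a winning strategy for the objective
`{w : limsup (1/n) ∑_{i<n} w_i ≤ 0}` but no positional winning strategy. -/
theorem stmt10 :
    ∃ (V : Type) (E : V → ℤ → V → Prop) (Eve : V → Prop) (v0 : V),
      -- finite out-degree
      (∀ v, {p : ℤ × V | E v p.1 p.2}.Finite) ∧
      -- every vertex has an outgoing edge
      (∀ v, ∃ w v', E v w v') ∧
      -- Eve has a (history-dependent) winning strategy:
      (∃ σ : List V → V → ℤ × V,
        (∀ h u, Eve u → E u (σ h u).1 (σ h u).2) ∧
        ∀ (p : ℕ → V) (ws : ℕ → ℤ), p 0 = v0 →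
          (∀ i, E (p i) (ws i) (p (i + 1))) →
          (∀ i, Eve (p i) →
            (ws i, p (i + 1)) = σ (List.ofFn fun j : Fin i => p j) (p i)) →
          Filter.atTop.limsup
            (fun n => (((∑ i ∈ Finset.range n, (ws i : ℝ)) / n : ℝ) : EReal)) ≤ 0) ∧
      -- but no positional winning strategy:
      (∀ σ : V → ℤ × V, (∀ u, Eve u → E u (σ u).1 (σ u).2) →
        ∃ (p : ℕ → V) (ws : ℕ → ℤ), p 0 = v0 ∧
          (∀ i, E (p i) (ws i) (p (i + 1))) ∧
          (∀ i, Eve (p i) → (ws i, p (i + 1)) = σ (p i)) ∧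
          ¬ Filter.atTop.limsup
              (fun n => (((∑ i ∈ Finset.range n, (ws i : ℝ)) / n : ℝ) : EReal)) ≤ 0) := by
  refine ⟨ℕ, Stmt10.E, fun _ => True, 0, ?_, ?_, ?_, ?_⟩
  · -- finite out-degree
    intro v
    apply Set.Finite.subset ((Set.finite_singleton (((1 : ℤ) - v, 0) : ℤ × ℕ)).insert ((1 : ℤ), v + 1))
    rintro ⟨w, m⟩ (⟨hw, hm⟩ | ⟨_, hw, hm⟩) <;> subst hw <;> subst hm <;> simp
  · -- totality
    intro v
    exact ⟨1, v + 1, Or.inl ⟨rfl, rfl⟩⟩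
  · -- winning history strategy
    refine ⟨fun h u => if u = Pos h.length then (W h.length, Pos (h.length + 1)) else (1, u + 1),
      ?_, ?_⟩
    · intro h u _
      by_cases hu : u = Pos h.length
      · simp only [hu, if_pos rfl]
        exact valid h.length
      · simp only [if_neg hu]
        exact Or.inl ⟨rfl, rfl⟩
    · intro p ws hp0 _ hcons
      have hkey : ∀ i, p i = Pos i := by
        intro i
        induction i with
        | zero => rw [hp0]; rfl
        | succ i ih =>
          have h := hcons i trivial
          simp only [List.length_ofFn] at h
          rw [ih, if_pos rfl] at h
          exact congrArg Prod.snd h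
      have hws : ∀ i, ws i = W i := by
        intro i
        have h := hcons i trivial
        simp only [List.length_ofFn] at h
        rw [hkey i, if_pos rfl] at h
        exact congrArg Prod.fst h
      have : (fun n => (((∑ i ∈ Finset.range n, (ws i : ℝ)) / n : ℝ) : EReal))
          = (fun n => (((∑ i ∈ Finset.range n, (W i : ℝ)) / n : ℝ) : EReal)) := by
        funext n
        simp only [hws]
      rw [this]
      exact limsup_W_le
  · -- no positional winning strategy
    intro σ hσ
    by_cases hall : ∀ n : ℕ, σ n = (1, n + 1)
    · -- never exits: all weights +1
      refine ⟨fun i => i, fun _ => 1, rfl, fun i => Or.inl ⟨rfl, rfl⟩,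
        fun i _ => (hall i).symm, ?_⟩
      show ¬ Filter.atTop.limsup (fun n =>
          (((∑ i ∈ Finset.range n, ((1 : ℤ) : ℝ)) / n : ℝ) : EReal)) ≤ 0
      apply not_limsup_le _ 1 one_pos
      intro N
      refine ⟨max N 1, le_max_left _ _, ?_⟩
      have hn : (1 : ℕ) ≤ max N 1 := le_max_right _ _
      have hnR : (0 : ℝ) < (max N 1 : ℕ) := by exact_mod_cast hn
      congr 1
      rw [Finset.sum_const, Finset.card_range]
      field_simp
      simp [nsmul_eq_mul]
    · push_neg at hall
      have hex : ∃ n : ℕ, σ n ≠ (1, n + 1) := hall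
      classical
      set K := Nat.find hex with hKdef
      have hK : σ K ≠ (1, K + 1) := Nat.find_spec hex
      have hKmin : ∀ m < K, σ m = (1, m + 1) := by
        intro m hm
        by_contra hc
        have := Nat.find_le (h := hex) hc
        omega
      have hEK := hσ K trivial
      rcases hEK with ⟨hw, hm⟩ | ⟨hK2, hw, hm⟩
      · exact absurd (Prod.ext hw hm) hK
      -- exit at K, K ≥ 2; play is periodic with period K+1
      refine ⟨fun i => i % (K + 1), fun i => if i % (K + 1) = K then (1 - (K : ℤ)) else 1,
        Nat.zero_mod _, ?_, ?_, ?_⟩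
      · intro i
        show E (i % (K + 1)) (if i % (K + 1) = K then (1 - (K : ℤ)) else 1) ((i + 1) % (K + 1))
        by_cases h : i % (K + 1) = K
        · rw [if_pos h, h]
          right
          refine ⟨hK2, rfl, ?_⟩
          have : (i + 1) % (K + 1) = 0 := by
            rw [Nat.add_mod, h, Nat.mod_eq_of_lt (by omega : 1 < K + 1)]
            simp
          rw [this]
        · rw [if_neg h]
          left
          refine ⟨rfl, ?_⟩
          have hlt : i % (K + 1) < K + 1 := Nat.mod_lt _ (by omega)
          rw [Nat.add_mod, Nat.mod_eq_of_lt (by omega : 1 < K + 1),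
            Nat.mod_eq_of_lt (by omega : i % (K + 1) + 1 < K + 1)]
      · intro i _
        show ((if i % (K + 1) = K then (1 - (K : ℤ)) else 1), (i + 1) % (K + 1)) = σ (i % (K + 1))
        by_cases h : i % (K + 1) = K
        · rw [if_pos h, h]
          have h0 : (i + 1) % (K + 1) = 0 := by
            rw [Nat.add_mod, h, Nat.mod_eq_of_lt (by omega : 1 < K + 1)]
            simp
          rw [h0]
          exact (Prod.ext hw hm).symm
        · rw [if_neg h]
          have hlt : i % (K + 1) < K + 1 := Nat.mod_lt _ (by omega)
          have h1 : (i + 1) % (K + 1) = i % (K + 1) + 1 := by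
            rw [Nat.add_mod, Nat.mod_eq_of_lt (by omega : 1 < K + 1),
              Nat.mod_eq_of_lt (by omega : i % (K + 1) + 1 < K + 1)]
          rw [h1]
          exact (hKmin _ (by omega)).symm
      · show ¬ Filter.atTop.limsup (fun n =>
            (((∑ i ∈ Finset.range n,
              ((if i % (K + 1) = K then (1 - (K : ℤ)) else 1 : ℤ) : ℝ)) / n : ℝ) : EReal)) ≤ 0
        apply not_limsup_le _ (1 / ((K : ℝ) + 1)) (by positivity)
        intro N
        set m := max N 1 with hmdef
        refine ⟨m * (K + 1), le_trans (le_max_left _ _) (Nat.le_mul_of_pos_right _ (by omega)), ?_⟩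
        have hsum : ∑ i ∈ Finset.range (m * (K + 1)),
            ((if i % (K + 1) = K then (1 - (K : ℤ)) else 1 : ℤ) : ℝ) = (m : ℝ) := by
          exact_mod_cast congrArg (fun z : ℤ => (z : ℝ)) (sum_ws K m)
        have hm1 : (1 : ℕ) ≤ m := le_max_right _ _
        have hmpos : (0 : ℝ) < (m : ℝ) := by exact_mod_cast hm1
        congr 1
        rw [hsum]
        push_cast
        rw [div_eq_div_iff (by positivity) (by positivity)]
        ring
end

section
/- For the infinite one-player game where from the initial vertex Eve chooses, at stage k, to traverse a gadget producing weight +1 followed by n_k weights −1 for any n_k of her choosing (realized by a graph of out-degree 2), Eve can ensure liminf_n (1/n)∑_{i<n} w_i ≤ 0, but any positional strategy produces an eventually periodic weight sequence with liminf average equal to some value determined by a single gadget, showing positional strategies fail for the liminf mean-payoff objectives {w : liminf ≤ 0} and {w : liminf < 0}. -/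
open Filter Finset

/-- The game graph on `ℕ`: from `n` either descend (weight `1`) to `n+1`,
or return (weight `1 - n`) to the hub `0`. Every cycle has total weight `1`. -/
private def Estmt : ℕ → ℤ → ℕ → Prop := fun n w m =>
  (w = 1 ∧ m = n + 1) ∨ (w = 1 - (n : ℤ) ∧ m = 0)

/-- State of Eve's non-positional play: (current vertex, current target depth). -/
private def st (i : ℕ) : ℕ × ℕ :=
  Nat.rec (0, 1) (fun _ s => if s.1 < s.2 then (s.1 + 1, s.2) else (0, s.2 + 1)) i

private lemma st_zero : st 0 = (0, 1) := rfl

private lemma st_succ (i : ℕ) :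
    st (i + 1) = if (st i).1 < (st i).2 then ((st i).1 + 1, (st i).2)
      else (0, (st i).2 + 1) := rfl

/-- Weights of Eve's non-positional play. -/
private def wEve (i : ℕ) : ℤ :=
  if (st i).1 < (st i).2 then 1 else 1 - ((st i).1 : ℤ)

/-- Time at which the `k`-th excursion is completed. -/
private def TT (i : ℕ) : ℕ := Nat.rec 0 (fun k t => t + (k + 2)) i

private lemma TT_zero : TT 0 = 0 := rfl
private lemma TT_succ (k : ℕ) : TT (k + 1) = TT k + (k + 2) := rfl

private lemma le_TT (k : ℕ) : k ≤ TT k := by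
  induction k with
  | zero => simp [TT_zero]
  | succ k ih => rw [TT_succ]; omega

private lemma sq_le_TT (k : ℕ) : k * k ≤ 2 * TT k := by
  induction k with
  | zero => simp [TT_zero]
  | succ k ih => rw [TT_succ]; nlinarith

private lemma invA (k : ℕ) :
    st (TT k) = (0, k + 1) ∧ (∑ i ∈ range (TT k), wEve i) = (k : ℤ) := by
  induction k with
  | zero => exact ⟨rfl, rfl⟩
  | succ k ih =>
    have inner : ∀ r, r ≤ k + 1 → st (TT k + r) = (r, k + 1) ∧
        (∑ i ∈ range (TT k + r), wEve i) = (k : ℤ) + r := by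
      intro r
      induction r with
      | zero => intro _; simpa using ih
      | succ r ihr =>
        intro hr
        obtain ⟨h1, h2⟩ := ihr (by omega)
        have hlt : (st (TT k + r)).1 < (st (TT k + r)).2 := by rw [h1]; omega
        have hw : wEve (TT k + r) = 1 := by rw [wEve, if_pos hlt]
        constructor
        · show st ((TT k + r) + 1) = _
          rw [st_succ, if_pos hlt, h1]
        · rw [show TT k + (r + 1) = (TT k + r) + 1 by omega, sum_range_succ, h2, hw]
          push_cast; ring
    obtain ⟨h1, h2⟩ := inner (k + 1) le_rfl
    have hnlt : ¬ (st (TT k + (k + 1))).1 < (st (TT k + (k + 1))).2 := by rw [h1]; omega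
    have hw : wEve (TT k + (k + 1)) = 1 - ((k : ℤ) + 1) := by
      rw [wEve, if_neg hnlt, h1]; push_cast; ring
    constructor
    · rw [show TT (k + 1) = (TT k + (k + 1)) + 1 by rw [TT_succ]; omega,
        st_succ, if_neg hnlt, h1]
    · rw [show TT (k + 1) = (TT k + (k + 1)) + 1 by rw [TT_succ]; omega,
        sum_range_succ, h2, hw]
      push_cast; ring

private lemma liminf_not_le_zero {g : ℕ → EReal} {c : ℝ} (hc : 0 < c)
    (h : ∀ᶠ n in atTop, (c : EReal) ≤ g n) : ¬ Filter.atTop.liminf g ≤ 0 := by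
  intro hle
  have h1 : (c : EReal) ≤ Filter.atTop.liminf g := le_liminf_of_le (by isBoundedDefault) h
  have h2 : (c : EReal) ≤ ((0 : ℝ) : EReal) := by
    simpa using h1.trans hle
  rw [EReal.coe_le_coe_iff] at h2
  linarith

/-- There is a one-player integer-weighted game graph of finite out-degree (all
vertices controlled by Eve) in which Eve can ensure
`liminf (1/n) ∑_{i<n} w_i ≤ 0`, but every positional strategy yields a play whose
weight sequence has `liminf > 0`; in particular no positional strategy wins the
objectives `{w : liminf ≤ 0}` or `{w : liminf < 0}`. -/
theorem stmt16 :
    ∃ (V : Type) (E : V → ℤ → V → Prop) (v0 : V),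
      -- finite out-degree
      (∀ v, {p : ℤ × V | E v p.1 p.2}.Finite) ∧
      -- every vertex has an outgoing edge
      (∀ v, ∃ w v', E v w v') ∧
      -- Eve (controlling everything) can ensure liminf ≤ 0:
      (∃ (p : ℕ → V) (ws : ℕ → ℤ), p 0 = v0 ∧
        (∀ i, E (p i) (ws i) (p (i + 1))) ∧
        Filter.atTop.liminf
          (fun n => (((∑ i ∈ Finset.range n, (ws i : ℝ)) / n : ℝ) : EReal)) ≤ 0) ∧
      -- but every positional strategy fails both liminf objectives:
      (∀ σ : V → ℤ × V, (∀ u, E u (σ u).1 (σ u).2) →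
        ∀ (p : ℕ → V) (ws : ℕ → ℤ), p 0 = v0 →
          (∀ i, (ws i, p (i + 1)) = σ (p i)) →
          ¬ Filter.atTop.liminf
              (fun n => (((∑ i ∈ Finset.range n, (ws i : ℝ)) / n : ℝ) : EReal)) ≤ 0 ∧
          ¬ Filter.atTop.liminf
              (fun n => (((∑ i ∈ Finset.range n, (ws i : ℝ)) / n : ℝ) : EReal)) < 0) := by
  refine ⟨ℕ, Estmt, 0, ?_, ?_, ?_, ?_⟩
  · -- finite out-degree
    intro v
    apply Set.Finite.subset
      ((Set.finite_singleton ((1 - (v : ℤ), 0) : ℤ × ℕ)).insert ((1 : ℤ), v + 1))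
    rintro ⟨w, m⟩ h
    rcases h with ⟨hw, hm⟩ | ⟨hw, hm⟩
    · simp only [Set.mem_insert_iff, Set.mem_singleton_iff, Prod.mk.injEq]
      left; exact ⟨hw, hm⟩
    · simp only [Set.mem_insert_iff, Set.mem_singleton_iff, Prod.mk.injEq]
      right; exact ⟨hw, hm⟩
  · -- totality
    intro v; exact ⟨1, v + 1, Or.inl ⟨rfl, rfl⟩⟩
  · -- Eve can ensure liminf ≤ 0
    refine ⟨fun i => (st i).1, wEve, rfl, ?_, ?_⟩
    · intro i
      show Estmt (st i).1 (wEve i) (st (i + 1)).1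
      rw [st_succ]
      by_cases h : (st i).1 < (st i).2
      · rw [if_pos h]
        exact Or.inl ⟨by rw [wEve, if_pos h], rfl⟩
      · rw [if_neg h]
        exact Or.inr ⟨by rw [wEve, if_neg h], rfl⟩
    · -- liminf ≤ 0
      apply le_of_forall_gt_imp_ge_of_dense
      intro c hc
      obtain ⟨r, hr0, hrc⟩ := EReal.exists_between_coe_real hc
      have hr0' : (0 : ℝ) < r := by exact_mod_cast hr0
      refine le_trans (liminf_le_of_frequently_le ?_ (by isBoundedDefault)) hrc.le
      rw [Filter.frequently_atTop]
      intro N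
      obtain ⟨K, hK⟩ := exists_nat_ge (2 / r)
      set k := max (max N K) 1 with hk
      have hk1 : 1 ≤ k := le_max_right _ _
      have hkN : N ≤ k := le_trans (le_max_left _ _) (le_max_left _ _)
      have hkK : K ≤ k := le_trans (le_max_right N K) (le_max_left _ _)
      refine ⟨TT k, le_trans hkN (le_TT k), ?_⟩
      have hsum : (∑ i ∈ Finset.range (TT k), ((wEve i : ℤ) : ℝ)) = (k : ℝ) := by
        have h' := congrArg (fun z : ℤ => (z : ℝ)) (invA k).2
        push_cast at h' ⊢
        exact h'
      show (((∑ i ∈ Finset.range (TT k), ((wEve i : ℤ) : ℝ)) / (TT k) : ℝ) : EReal) ≤ (r : EReal)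
      rw [hsum, EReal.coe_le_coe_iff]
      have hTpos : (0 : ℝ) < (TT k : ℝ) := by
        have := le_TT k
        have : 1 ≤ TT k := le_trans hk1 (le_TT k)
        exact_mod_cast this
      rw [div_le_iff₀ hTpos]
      have hsq : ((k : ℝ)) * k ≤ 2 * (TT k : ℝ) := by exact_mod_cast sq_le_TT k
      have hKk : (2 / r) ≤ (k : ℝ) := le_trans hK (by exact_mod_cast hkK)
      have hkpos : (0 : ℝ) < k := by exact_mod_cast hk1
      -- from 2/r ≤ k : 2 ≤ r * k
      have h2rk : 2 ≤ r * k := by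
        rw [div_le_iff₀ hr0'] at hKk
        nlinarith
      nlinarith
  · -- positional strategies fail
    intro σ hσ p ws hp0 hstep
    have hws : ∀ i, ws i = (σ (p i)).1 := fun i => congrArg Prod.fst (hstep i)
    have hps : ∀ i, p (i + 1) = (σ (p i)).2 := fun i => congrArg Prod.snd (hstep i)
    suffices h : ¬ Filter.atTop.liminf
        (fun n => (((∑ i ∈ Finset.range n, (ws i : ℝ)) / n : ℝ) : EReal)) ≤ 0 by
      exact ⟨h, fun h' => h h'.le⟩
    by_cases hex : ∃ n, (σ n).2 = 0
    · -- eventually returns: periodic play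
      set m := Nat.find hex with hm
      have hRm : (σ m).2 = 0 := Nat.find_spec hex
      have hR : σ m = (1 - (m : ℤ), 0) := by
        rcases hσ m with ⟨hw, h2⟩ | ⟨hw, h2⟩
        · omega
        · rw [← hw, ← h2]
      have hD : ∀ n < m, σ n = (1, n + 1) := by
        intro n hn
        have hn0 : ¬ (σ n).2 = 0 := Nat.find_min hex hn
        rcases hσ n with ⟨hw, h2⟩ | ⟨hw, h2⟩
        · rw [← hw, ← h2]
        · exact absurd h2 hn0
      -- the play is p i = i % (m+1)
      have hp : ∀ i, p i = i % (m + 1) := by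
        intro i
        induction i with
        | zero => simpa using hp0
        | succ i ih =>
          have hdm := Nat.div_add_mod' i (m + 1)
          set q := i / (m + 1) with hq
          set r := i % (m + 1) with hrr
          have hrlt : r < m + 1 := Nat.mod_lt _ (by omega)
          by_cases hcase : r < m
          · have heq : i + 1 = (r + 1) + q * (m + 1) := by rw [← hdm]; ring
            rw [hps i, ih, hD r hcase]
            show r + 1 = (i + 1) % (m + 1)
            rw [heq, Nat.add_mul_mod_self_right, Nat.mod_eq_of_lt (by omega)]
          · have hrm : r = m := by omega
            have heq : i + 1 = (q + 1) * (m + 1) := by rw [← hdm, hrm]; ring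
            rw [hps i, ih, hrm, hR]
            show 0 = (i + 1) % (m + 1)
            rw [heq, Nat.mul_mod_left]
      have hwsf : ∀ i, ws i = if i % (m + 1) = m then 1 - (m : ℤ) else 1 := by
        intro i
        by_cases hcase : i % (m + 1) = m
        · rw [if_pos hcase, hws i, hp i, hcase, hR]
        · have hlt : i % (m + 1) < m := by
            have := Nat.mod_lt i (show 0 < m + 1 by omega)
            omega
          rw [if_neg hcase, hws i, hp i, hD _ hlt]
      -- partial sums
      have hS : ∀ t, (∑ i ∈ range t, ws i) = ((t / (m + 1) : ℕ) : ℤ) + ((t % (m + 1) : ℕ) : ℤ) := by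
        intro t
        induction t with
        | zero => simp
        | succ t ih =>
          rw [sum_range_succ, ih, hwsf t]
          have hdm := Nat.div_add_mod' t (m + 1)
          set q := t / (m + 1) with hq
          set r := t % (m + 1) with hrr
          have hrlt : r < m + 1 := Nat.mod_lt _ (by omega)
          by_cases hcase : r = m
          · have heq : t + 1 = (q + 1) * (m + 1) := by rw [← hdm, hcase]; ring
            rw [if_pos hcase, heq, Nat.mul_mod_left, Nat.mul_div_cancel _ (by omega : 0 < m + 1)]
            push_cast [hcase]
            ring
          · have heq : t + 1 = (r + 1) + q * (m + 1) := by rw [← hdm]; ring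
            rw [if_neg hcase, heq, Nat.add_mul_mod_self_right,
              Nat.mod_eq_of_lt (by omega), Nat.add_mul_div_right _ _ (by omega : 0 < m + 1),
              Nat.div_eq_of_lt (by omega)]
            push_cast
            ring
      -- liminf ≥ 1/(2(m+1)) > 0
      apply liminf_not_le_zero (c := 1 / (2 * ((m : ℝ) + 1)))
        (by positivity)
      rw [Filter.eventually_atTop]
      refine ⟨2 * m + 2, fun t ht => ?_⟩
      have hsum : (∑ i ∈ Finset.range t, ((ws i : ℤ) : ℝ))
          = ((t / (m + 1) : ℕ) : ℝ) + ((t % (m + 1) : ℕ) : ℝ) := by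
        have h' := congrArg (fun z : ℤ => (z : ℝ)) (hS t)
        push_cast at h' ⊢
        exact h'
      show ((1 / (2 * ((m : ℝ) + 1)) : ℝ) : EReal) ≤
        (((∑ i ∈ Finset.range t, ((ws i : ℤ) : ℝ)) / t : ℝ) : EReal)
      rw [hsum, EReal.coe_le_coe_iff]
      have hdm := Nat.div_add_mod' t (m + 1)
      set q := t / (m + 1) with hq
      set r := t % (m + 1) with hrr
      have hrlt : r < m + 1 := Nat.mod_lt _ (by omega)
      have htpos : (0 : ℝ) < t := by
        have : 0 < t := by omega
        exact_mod_cast this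
      rw [div_le_div_iff₀ (by positivity) htpos]
      -- 1 * t ≤ (q + r) * (2 * (m + 1))
      have hqt : (q : ℝ) * (m + 1) + r = t := by exact_mod_cast hdm
      have hrm : (r : ℝ) ≤ m := by
        have : r ≤ m := by omega
        exact_mod_cast this
      have htm : (2 : ℝ) * m + 2 ≤ t := by exact_mod_cast ht
      have hrnn : (0 : ℝ) ≤ r := by positivity
      have hmnn : (0 : ℝ) ≤ m := by positivity
      have hqnn : (0 : ℝ) ≤ q := by positivity
      nlinarith
    · -- never returns: play descends forever, all weights 1
      push_neg at hex
      have hD : ∀ n, σ n = (1, n + 1) := by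
        intro n
        rcases hσ n with ⟨hw, h2⟩ | ⟨hw, h2⟩
        · rw [← hw, ← h2]
        · exact absurd h2 (hex n)
      have hp : ∀ i, p i = i := by
        intro i
        induction i with
        | zero => simpa using hp0
        | succ i ih => rw [hps i, ih, hD]
      have hws1 : ∀ i, ws i = 1 := by intro i; rw [hws i, hD]
      apply liminf_not_le_zero (c := (1 : ℝ)) one_pos
      rw [Filter.eventually_atTop]
      refine ⟨1, fun t ht => ?_⟩
      have hsum : (∑ i ∈ Finset.range t, ((ws i : ℤ) : ℝ)) = (t : ℝ) := by
        simp [hws1]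
      show ((1 : ℝ) : EReal) ≤ _
      rw [hsum, EReal.coe_le_coe_iff]
      have htpos : (0 : ℝ) < t := by exact_mod_cast ht
      rw [le_div_iff₀ htpos]
      linarith
end
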